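/- The first-level complementary wavelet packets φ0 and φ1 satisfy the same orthonormality relations as the wavelet packets ψ0 and ψ1: for all μ, ν ∈ {0,1} and all l, p ∈ {0,…,N/2−1}, ⟨φ_μ[·−2l], φ_ν[·−2p]⟩ = δ[μ−ν]·δ[l−p]; in particular the family {φ0[·−2l]} ∪ {φ1[·−2l]}, l = 0,…,N/2−1, is an orthonormal basis of Π[N]. -/

import Mathlib

open Finset

noncomputable def omegaN (N : ℕ) : ℂ := Complex.exp (2 * Real.pi * Complex.I / N)

noncomputable def U4r (N r : ℕ) (n : ℤ) : ℝ :=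
  ((Real.cos (Real.pi * n / N)) ^ (4 * r) + (Real.sin (Real.pi * n / N)) ^ (4 * r)) / 2

noncomputable def betaF (N r : ℕ) (n : ℤ) : ℂ :=
  Complex.ofReal ((Real.cos (Real.pi * n / N)) ^ (2 * r) / Real.sqrt (U4r N r n))

noncomputable def alphaF (N r : ℕ) (n : ℤ) : ℂ :=
  omegaN N ^ n * Complex.ofReal ((Real.sin (Real.pi * n / N)) ^ (2 * r) / Real.sqrt (U4r N r n))

noncomputable def psi0 (N r : ℕ) (k : ℤ) : ℂ :=
  (N : ℂ)⁻¹ * ∑ n ∈ Finset.range N, omegaN N ^ (k * (n : ℤ)) * betaF N r n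

noncomputable def psi1 (N r : ℕ) (k : ℤ) : ℂ :=
  (N : ℂ)⁻¹ * ∑ n ∈ Finset.range N, omegaN N ^ (k * (n : ℤ)) * alphaF N r n

noncomputable def ip (N : ℕ) (x y : ℤ → ℂ) : ℂ :=
  ∑ k ∈ Finset.range N, x k * (starRingEnd ℂ) (y k)

/-- DFT of the first-level complementary wavelet packet φ₀. -/
noncomputable def phi0hat (N r : ℕ) (n : ℕ) : ℂ :=
  if n = 0 then (Real.sqrt 2 : ℂ)
  else if 2 * n = N then 0
  else if 2 * n < N then -Complex.I * betaF N r n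
  else Complex.I * betaF N r n

/-- DFT of the first-level complementary wavelet packet φ₁. -/
noncomputable def phi1hat (N r : ℕ) (n : ℕ) : ℂ :=
  if n = 0 then 0
  else if 2 * n = N then -(Real.sqrt 2 : ℂ)
  else if 2 * n < N then -Complex.I * alphaF N r n
  else Complex.I * alphaF N r n

/-- The first-level complementary wavelet packets φ₀, φ₁, via the inverse DFT. -/
noncomputable def phiW (N r : ℕ) (μ : Fin 2) (k : ℤ) : ℂ :=
  (N : ℂ)⁻¹ * ∑ n ∈ Finset.range N,
    omegaN N ^ (k * (n : ℤ)) * (if μ.val = 0 then phi0hat N r n else phi1hat N r n)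

open ComplexConjugate

/-!
Each packet is the inverse DFT of its symbol `phiHat`, so by Parseval
`⟨φ_μ[· - 2l], φ_ν[· - 2p]⟩ = N⁻¹ ∑ₙ ω^(2n(p - l)) φ̂_μ[n] conj φ̂_ν[n]`. As `ω^(2·N/2) = 1`, the
terms `n` and `n + N/2` can be folded together. Under `n ↦ n + N/2` the cosine and sine in `β`
and `α` trade places, so the matrix `(φ̂_μ[n + c N/2])_{μ,c}` has the shape
`[[x, y], [w ȳ, -w x̄]]` with `|x|² + |y|² = 2` and `|w| = 1`; its rows are orthogonal of squared
norm 2. What remains is `δ[μ-ν] (2/N) ∑_{n < N/2} (ω²)^(n(p - l)) = δ[μ-ν] δ[l-p]`.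
The `N` shifted packets are thus orthonormal in the `N`-dimensional space `Π[N]`, hence an
orthonormal basis, and the reconstruction formula is the expansion in that basis.
-/

lemma omegaN_ne_zero (N : ℕ) : omegaN N ≠ 0 := Complex.exp_ne_zero _

lemma isPrimitiveRoot_omegaN {N : ℕ} (hN : N ≠ 0) : IsPrimitiveRoot (omegaN N) N :=
  Complex.isPrimitiveRoot_exp N hN

lemma conj_omegaN_zpow (N : ℕ) (d : ℤ) : conj (omegaN N ^ d) = omegaN N ^ (-d) := by
  rw [map_zpow₀, omegaN, ← Complex.exp_conj, zpow_neg, ← inv_zpow, ← Complex.exp_neg]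
  congr 2
  simp [map_div₀, Complex.conj_I, neg_div, map_ofNat]

lemma omegaN_zpow_mul_conj (N : ℕ) (d : ℤ) : omegaN N ^ d * conj (omegaN N ^ d) = 1 := by
  rw [conj_omegaN_zpow, ← zpow_add₀ (omegaN_ne_zero N), add_neg_cancel, zpow_zero]

lemma omegaN_two_mul_zpow_self {M : ℕ} (hM : M ≠ 0) : omegaN (2 * M) ^ (M : ℤ) = -1 := by
  rw [zpow_natCast]
  exact ((isPrimitiveRoot_omegaN (by omega)).pow (by omega) (mul_comm 2 M)).eq_neg_one_of_two_right

lemma IsPrimitiveRoot.sum_range_zpow_mul {K : Type*} [Field K] {ζ : K} {N : ℕ}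
    (hζ : IsPrimitiveRoot ζ N) (d : ℤ) :
    ∑ n ∈ Finset.range N, ζ ^ ((n : ℤ) * d) = if (N : ℤ) ∣ d then (N : K) else 0 := by
  simp_rw [mul_comm _ d, zpow_mul, zpow_natCast]
  split_ifs with h
  · simp [(hζ.zpow_eq_one_iff_dvd d).2 h]
  · have h1 : ζ ^ d ≠ 1 := fun h1 => h ((hζ.zpow_eq_one_iff_dvd d).1 h1)
    rw [geom_sum_eq h1, ← zpow_natCast, ← zpow_mul, mul_comm, zpow_mul, zpow_natCast,
      hζ.pow_eq_one, one_zpow, sub_self, zero_div]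

lemma Int.natCast_dvd_sub_iff_eq {N n m : ℕ} (hn : n < N) (hm : m < N) :
    (N : ℤ) ∣ (n : ℤ) - m ↔ n = m := by
  refine ⟨fun h => ?_, fun h => by simp [h]⟩
  have := Int.eq_zero_of_abs_lt_dvd h (by rw [abs_lt]; omega)
  omega

lemma Finset.sum_range_two_mul {β : Type*} [AddCommMonoid β] (f : ℕ → β) (M : ℕ) :
    ∑ n ∈ Finset.range (2 * M), f n = ∑ n ∈ Finset.range M, (f n + f (M + n)) := by
  rw [two_mul, Finset.sum_range_add, Finset.sum_add_distrib]

noncomputable def invDFT (N : ℕ) (f : ℕ → ℂ) (k : ℤ) : ℂ :=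
  (N : ℂ)⁻¹ * ∑ n ∈ Finset.range N, omegaN N ^ (k * (n : ℤ)) * f n

lemma invDFT_periodic (N : ℕ) (f : ℕ → ℂ) : Function.Periodic (invDFT N f) N := by
  intro k
  rcases eq_or_ne N 0 with rfl | hN
  · rw [Nat.cast_zero, add_zero]
  have hωN : omegaN N ^ (N : ℤ) = 1 := by
    rw [zpow_natCast, (isPrimitiveRoot_omegaN hN).pow_eq_one]
  simp_rw [invDFT, add_mul, zpow_add₀ (omegaN_ne_zero N), zpow_mul _ (N : ℤ), hωN, one_zpow,
    mul_one]

lemma invDFT_sub (N : ℕ) (f : ℕ → ℂ) (a k : ℤ) :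
    invDFT N f (k - a) = invDFT N (fun n => omegaN N ^ (-a * n) * f n) k := by
  unfold invDFT
  congr 1
  refine Finset.sum_congr rfl fun n _ => ?_
  rw [← mul_assoc, ← zpow_add₀ (omegaN_ne_zero N)]
  ring_nf

lemma ip_invDFT {N : ℕ} (hN : N ≠ 0) (f g : ℕ → ℂ) :
    ip N (invDFT N f) (invDFT N g) = (N : ℂ)⁻¹ * ∑ n ∈ Finset.range N, f n * conj (g n) := by
  have hω := isPrimitiveRoot_omegaN hN
  have orth : ∀ n ∈ Finset.range N, ∀ m ∈ Finset.range N,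
      ∑ k ∈ Finset.range N, omegaN N ^ ((k : ℤ) * (n - m)) = if n = m then (N : ℂ) else 0 := by
    intro n hn m hm
    simp only [hω.sum_range_zpow_mul, Int.natCast_dvd_sub_iff_eq (mem_range.1 hn) (mem_range.1 hm)]
  calc ip N (invDFT N f) (invDFT N g)
      = (N : ℂ)⁻¹ * (N : ℂ)⁻¹ * ∑ k ∈ Finset.range N,
          (∑ n ∈ Finset.range N, omegaN N ^ ((k : ℤ) * n) * f n) *
            ∑ m ∈ Finset.range N, omegaN N ^ (-((k : ℤ) * m)) * conj (g m) := by
        rw [ip, mul_sum]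
        refine sum_congr rfl fun k _ => ?_
        simp only [invDFT, map_mul, map_sum, conj_omegaN_zpow, map_inv₀, map_natCast]
        ring
    _ = (N : ℂ)⁻¹ * (N : ℂ)⁻¹ * ∑ n ∈ Finset.range N, ∑ m ∈ Finset.range N,
          f n * conj (g m) * ∑ k ∈ Finset.range N, omegaN N ^ ((k : ℤ) * (n - m)) := by
        congr 1
        simp_rw [sum_mul_sum, mul_sum]
        rw [sum_comm]
        refine sum_congr rfl fun n _ => ?_
        rw [sum_comm]
        refine sum_congr rfl fun m _ => sum_congr rfl fun k _ => ?_
        rw [mul_sub, sub_eq_add_neg, zpow_add₀ (omegaN_ne_zero N)]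
        ring
    _ = (N : ℂ)⁻¹ * ∑ n ∈ Finset.range N, f n * conj (g n) := by
        rw [sum_congr rfl fun n hn => sum_congr rfl fun m hm => by rw [orth n hn m hm]]
        simp only [mul_ite, mul_zero, sum_ite_eq]
        rw [sum_congr rfl fun n hn => if_pos hn, ← sum_mul]
        field_simp [Nat.cast_ne_zero.2 hN]

lemma ip_invDFT_sub {N : ℕ} (hN : N ≠ 0) (f g : ℕ → ℂ) (a b : ℤ) :
    ip N (fun k => invDFT N f (k - a)) (fun k => invDFT N g (k - b)) =
      (N : ℂ)⁻¹ * ∑ n ∈ Finset.range N, omegaN N ^ ((b - a) * n) * (f n * conj (g n)) := by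
  simp_rw [invDFT_sub]
  rw [ip_invDFT hN]
  refine congrArg _ (Finset.sum_congr rfl fun n _ => ?_)
  rw [map_mul, conj_omegaN_zpow, show (b - a) * n = -a * n + -(-b * n) by ring,
    zpow_add₀ (omegaN_ne_zero N)]
  ring

lemma U4r_pos (N r : ℕ) (n : ℤ) : 0 < U4r N r n := by
  set θ := Real.pi * n / N
  have hev : Even (4 * r) := ⟨2 * r, by ring⟩
  have hcs : Real.cos θ ≠ 0 ∨ Real.sin θ ≠ 0 := by
    by_contra! h
    simpa [h.1, h.2] using Real.cos_sq_add_sin_sq θ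
  unfold U4r
  rcases hcs with h | h
  · linarith [hev.pow_pos h, hev.pow_nonneg (Real.sin θ)]
  · linarith [hev.pow_pos h, hev.pow_nonneg (Real.cos θ)]

noncomputable def phiHat (N r : ℕ) (μ : Fin 2) (n : ℕ) : ℂ :=
  if μ.val = 0 then phi0hat N r n else phi1hat N r n

lemma phiW_eq_invDFT (N r : ℕ) (μ : Fin 2) : phiW N r μ = invDFT N (phiHat N r μ) := rfl

section HalfShift

variable {M r : ℕ}

lemma pi_mul_div_add_half (hM : M ≠ 0) (n : ℤ) :
    Real.pi * ((n + M : ℤ) : ℝ) / ((2 * M : ℕ) : ℝ) =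
      Real.pi * n / ((2 * M : ℕ) : ℝ) + Real.pi / 2 := by
  have : (M : ℝ) ≠ 0 := Nat.cast_ne_zero.2 hM
  push_cast
  field_simp

lemma U4r_add_half (hM : M ≠ 0) (n : ℤ) : U4r (2 * M) r (n + M) = U4r (2 * M) r n := by
  have hev : Even (4 * r) := ⟨2 * r, by ring⟩
  rw [U4r, U4r, pi_mul_div_add_half hM, Real.cos_add_pi_div_two, Real.sin_add_pi_div_two,
    hev.neg_pow, add_comm]

lemma betaF_add_half (hM : M ≠ 0) (n : ℤ) :
    betaF (2 * M) r (n + M) =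
      ((Real.sin (Real.pi * n / (2 * M : ℕ)) ^ (2 * r) / Real.sqrt (U4r (2 * M) r n) : ℝ) : ℂ) := by
  rw [betaF, pi_mul_div_add_half hM, Real.cos_add_pi_div_two, U4r_add_half hM,
    (even_two_mul r).neg_pow]

lemma alphaF_eq_mul_betaF_add_half (hM : M ≠ 0) (n : ℤ) :
    alphaF (2 * M) r n = omegaN (2 * M) ^ n * betaF (2 * M) r (n + M) := by
  rw [alphaF, betaF_add_half hM]

lemma alphaF_add_half (hM : M ≠ 0) (n : ℤ) :
    alphaF (2 * M) r (n + M) = -(omegaN (2 * M) ^ n * betaF (2 * M) r n) := by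
  rw [alphaF, betaF, pi_mul_div_add_half hM, Real.sin_add_pi_div_two, U4r_add_half hM,
    zpow_add₀ (omegaN_ne_zero _), omegaN_two_mul_zpow_self hM]
  ring

lemma betaF_sq_add_betaF_add_half_sq (hM : M ≠ 0) (n : ℤ) :
    betaF (2 * M) r n ^ 2 + betaF (2 * M) r (n + M) ^ 2 = 2 := by
  have hU := U4r_pos (2 * M) r n
  rw [betaF_add_half hM, betaF]
  norm_cast
  rw [div_pow, div_pow, Real.sq_sqrt hU.le, ← add_div, div_eq_iff hU.ne', U4r]
  ring

lemma exists_phiHat_matrix_eq (hM : M ≠ 0) {n : ℕ} (hn : n < M) :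
    ∃ x y w : ℂ, x * conj x + y * conj y = 2 ∧ w * conj w = 1 ∧
      phi0hat (2 * M) r n = x ∧ phi0hat (2 * M) r (M + n) = y ∧
      phi1hat (2 * M) r n = w * conj y ∧ phi1hat (2 * M) r (M + n) = -(w * conj x) := by
  rcases Nat.eq_zero_or_pos n with rfl | hn0
  · refine ⟨Real.sqrt 2, 0, 1, ?_, by simp, ?_, ?_, ?_, ?_⟩
    · rw [Complex.conj_ofReal, ← Complex.ofReal_mul, Real.mul_self_sqrt zero_le_two]
      simp
    all_goals simp [phi0hat, phi1hat, hM, Complex.conj_ofReal]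
  have hcast : ((M + n : ℕ) : ℤ) = n + M := by push_cast; ring
  have hconj (m : ℤ) : conj (betaF (2 * M) r m) = betaF (2 * M) r m := Complex.conj_ofReal _
  refine ⟨-Complex.I * betaF (2 * M) r n, Complex.I * betaF (2 * M) r (n + M),
    omegaN (2 * M) ^ (n : ℤ), ?_, omegaN_zpow_mul_conj _ _, ?_, ?_, ?_, ?_⟩
  · simp only [map_mul, map_neg, Complex.conj_I, hconj]
    linear_combination (-(betaF (2 * M) r n ^ 2 + betaF (2 * M) r (n + M) ^ 2)) * Complex.I_sq
      + betaF_sq_add_betaF_add_half_sq hM n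
  · simp [phi0hat, hn0.ne', show ¬ 2 * n = 2 * M by omega, show 2 * n < 2 * M by omega]
  · simp [phi0hat, hM, hn0.ne', hcast, show ¬ 2 * (M + n) = 2 * M by omega,
      show ¬ 2 * (M + n) < 2 * M by omega]
  · simp [phi1hat, hn0.ne', show ¬ 2 * n = 2 * M by omega, show 2 * n < 2 * M by omega,
      alphaF_eq_mul_betaF_add_half hM, hconj]
    ring
  · simp [phi1hat, hM, hn0.ne', hcast, show ¬ 2 * (M + n) = 2 * M by omega,
      show ¬ 2 * (M + n) < 2 * M by omega, alphaF_add_half hM, hconj]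
    ring

lemma phiHat_mul_conj_add_half (hM : M ≠ 0) {n : ℕ} (hn : n < M) (μ ν : Fin 2) :
    phiHat (2 * M) r μ n * conj (phiHat (2 * M) r ν n) +
        phiHat (2 * M) r μ (M + n) * conj (phiHat (2 * M) r ν (M + n)) =
      if μ = ν then 2 else 0 := by
  obtain ⟨x, y, w, hxy, hw, h0, h0', h1, h1'⟩ := exists_phiHat_matrix_eq (r := r) hM hn
  fin_cases μ <;> fin_cases ν <;>
    simp only [phiHat, Fin.isValue, Fin.zero_eta, Fin.mk_one, ↓reduceIte, one_ne_zero, zero_ne_one,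
      h0, h0', h1, h1', map_mul, map_neg, Complex.conj_conj, mul_neg, neg_mul]
  · exact hxy
  · ring
  · ring
  · linear_combination (w * conj w) * hxy + 2 * hw

end HalfShift

theorem ip_phiW_sub_two_mul {M : ℕ} (hM : M ≠ 0) (r : ℕ) (μ ν : Fin 2) {l p : ℕ}
    (hl : l < M) (hp : p < M) :
    ip (2 * M) (fun k => phiW (2 * M) r μ (k - 2 * (l : ℤ)))
        (fun k => phiW (2 * M) r ν (k - 2 * (p : ℤ))) =
      if μ = ν ∧ l = p then 1 else 0 := by
  have hζ : IsPrimitiveRoot (omegaN (2 * M) ^ 2) M :=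
    (isPrimitiveRoot_omegaN (by omega)).pow (by omega) rfl
  have hsq (n : ℕ) :
      omegaN (2 * M) ^ ((2 * (p : ℤ) - 2 * l) * n) =
        (omegaN (2 * M) ^ 2) ^ ((n : ℤ) * (p - l)) := by
    rw [← zpow_natCast, ← zpow_mul]
    ring_nf
  have hper (n : ℕ) :
      (omegaN (2 * M) ^ 2) ^ (((M + n : ℕ) : ℤ) * (p - l)) =
        (omegaN (2 * M) ^ 2) ^ ((n : ℤ) * (p - l)) := by
    rw [Nat.cast_add, add_mul, zpow_add₀ (pow_ne_zero _ (omegaN_ne_zero _)), zpow_mul,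
      zpow_natCast, hζ.pow_eq_one, one_zpow, one_mul]
  calc _ = ((2 * M : ℕ) : ℂ)⁻¹ * ∑ n ∈ Finset.range (2 * M),
          (omegaN (2 * M) ^ 2) ^ ((n : ℤ) * (p - l)) *
            (phiHat (2 * M) r μ n * conj (phiHat (2 * M) r ν n)) := by
        simp_rw [phiW_eq_invDFT, ip_invDFT_sub (by omega : 2 * M ≠ 0), ← hsq]
    _ = ((2 * M : ℕ) : ℂ)⁻¹ * ∑ n ∈ Finset.range M,
          (omegaN (2 * M) ^ 2) ^ ((n : ℤ) * (p - l)) * (if μ = ν then 2 else 0) := by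
        rw [Finset.sum_range_two_mul]
        simp_rw [hper, ← mul_add]
        exact congrArg _ (Finset.sum_congr rfl fun n hn => by
          rw [phiHat_mul_conj_add_half hM (Finset.mem_range.1 hn)])
    _ = ((2 * M : ℕ) : ℂ)⁻¹ *
          ((if (M : ℤ) ∣ p - l then (M : ℂ) else 0) * (if μ = ν then 2 else 0)) := by
        rw [← Finset.sum_mul, hζ.sum_range_zpow_mul]
    _ = if μ = ν ∧ l = p then 1 else 0 := by
        simp only [Int.natCast_dvd_sub_iff_eq hp hl]
        by_cases hμν : μ = ν
        · rcases eq_or_ne l p with rfl | hlp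
          · simp [hμν]
            field_simp
          · simp [hlp, hlp.symm]
        · simp [hμν]

theorem eq_sum_ip_mul_of_orthonormal {ι : Type*} [Fintype ι] [DecidableEq ι] {N : ℕ}
    (hN : N ≠ 0) (e : ι → ℤ → ℂ) (he : ∀ i, Function.Periodic (e i) N)
    (horth : ∀ i j, ip N (e i) (e j) = if i = j then 1 else 0)
    (hcard : Fintype.card ι = N) {x : ℤ → ℂ} (hx : Function.Periodic x N) (k : ℤ) :
    x k = ∑ i, ip N x (e i) * e i k := by
  let toE : (ℤ → ℂ) → EuclideanSpace ℂ (Fin N) := fun y => WithLp.toLp 2 fun t => y t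
  have hinner (y z : ℤ → ℂ) : inner ℂ (toE z) (toE y) = ip N y z := by
    simp [toE, PiLp.inner_apply, RCLike.inner_apply, ip,
      Fin.sum_univ_eq_sum_range (fun t => y t * conj (z t))]
  have hon : Orthonormal ℂ (toE ∘ e) := by
    rw [orthonormal_iff_ite]
    intro i j
    simp [hinner, horth, eq_comm]
  let b := OrthonormalBasis.mk hon
    (hon.linearIndependent.span_eq_top_of_card_eq_finrank' (by simp [hcard])).ge
  have hmod : 0 ≤ k % N ∧ k % N < N :=
    ⟨Int.emod_nonneg k (by omega), Int.emod_lt_of_pos k (by omega)⟩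
  let t : Fin N := ⟨(k % N).toNat, by omega⟩
  have heval (y : ℤ → ℂ) (hy : Function.Periodic y N) : y k = toE y t := by
    have ht : ((t : ℕ) : ℤ) = k - k / N * N := by
      rw [Fin.val_mk, Int.toNat_of_nonneg hmod.1, Int.emod_def, mul_comm]
    simp only [toE, ht]
    exact (hy.sub_int_mul_eq _).symm
  calc x k = toE x t := heval x hx
    _ = (∑ i, inner ℂ (b i) (toE x) • b i) t := by rw [b.sum_repr']
    _ = ∑ i, ip N x (e i) * e i k := by
        simp [b, hinner, heval _ (he _)]

theorem stmt_11_general (j r : ℕ) (hj : 3 ≤ j) (N : ℕ) (hN : N = 2 ^ j) :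
    (∀ μ ν : Fin 2, ∀ l p : ℕ, l < N / 2 → p < N / 2 →
      ip N (fun k => phiW N r μ (k - 2 * (l : ℤ))) (fun k => phiW N r ν (k - 2 * (p : ℤ))) =
        if μ = ν ∧ l = p then 1 else 0) ∧
    (∀ x : ℤ → ℂ, (∀ k : ℤ, x (k + N) = x k) → ∀ k : ℤ,
      x k = ∑ μ : Fin 2, ∑ l ∈ Finset.range (N / 2),
        ip N x (fun t => phiW N r μ (t - 2 * (l : ℤ))) * phiW N r μ (k - 2 * (l : ℤ))) := by
  obtain ⟨M, rfl⟩ : ∃ M, N = 2 * M :=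
    ⟨2 ^ (j - 1), by rw [hN, ← pow_succ', Nat.sub_add_cancel (by omega)]⟩
  have hM : M ≠ 0 := by have := Nat.two_pow_pos j; omega
  rw [Nat.mul_div_cancel_left M two_pos]
  refine ⟨fun μ ν l p hl hp => ip_phiW_sub_two_mul hM r μ ν hl hp, fun x hx k => ?_⟩
  let e (i : Fin 2 × Fin M) (k : ℤ) : ℂ := phiW (2 * M) r i.1 (k - 2 * (i.2 : ℕ))
  have horth (i i' : Fin 2 × Fin M) : ip (2 * M) (e i) (e i') = if i = i' then 1 else 0 := by
    simp [e, ip_phiW_sub_two_mul hM r _ _ i.2.isLt i'.2.isLt, Prod.ext_iff, Fin.ext_iff]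
  rw [eq_sum_ip_mul_of_orthonormal (by omega) e (fun i => (invDFT_periodic _ _).sub_const _)
    horth (by simp) hx k, Fintype.sum_prod_type]
  simp [e, Finset.sum_range]

/-- The complementary wavelet packets satisfy the same orthonormality
relations as ψ₀, ψ₁: ⟨φ_μ[·−2l], φ_ν[·−2p]⟩ = δ[μ−ν]δ[l−p]; in particular the family of
their two-sample shifts is an orthonormal basis of Π[N] (reconstruction formula). -/
theorem stmt_11 (j r : ℕ) (hj : 3 ≤ j) (hr : 1 ≤ r) (N : ℕ) (hN : N = 2 ^ j) :
    (∀ μ ν : Fin 2, ∀ l p : ℕ, l < N / 2 → p < N / 2 →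
      ip N (fun k => phiW N r μ (k - 2 * (l : ℤ))) (fun k => phiW N r ν (k - 2 * (p : ℤ))) =
        if μ = ν ∧ l = p then 1 else 0) ∧
    (∀ x : ℤ → ℂ, (∀ k : ℤ, x (k + N) = x k) → ∀ k : ℤ,
      x k = ∑ μ : Fin 2, ∑ l ∈ Finset.range (N / 2),
        ip N x (fun t => phiW N r μ (t - 2 * (l : ℤ))) * phiW N r μ (k - 2 * (l : ℤ))) :=
  stmt_11_general j r hj N hN
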